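/- arXiv:1610.02602 — 5 statements merged into one kernel-verified Lean document; each statement's English description precedes it below -/
import Mathlib

section
/- If p, q ∈ ℂ[z,w] are nonzero and relatively prime, then the ideal generated by p and q has finite codimension as a ℂ-linear subspace of ℂ[z,w]; i.e., there is a finite-dimensional ℂ-linear subspace R of ℂ[z,w] such that every ψ ∈ ℂ[z,w] can be written ψ = s·p + t·q + r with s, t ∈ ℂ[z,w] and r ∈ R. -/
noncomputable section

open MvPolynomial

/-- Polynomials in two variables `z, w` over `ℂ`. -/
abbrev CPoly2 : Type := MvPolynomial (Fin 2) ℂ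

/-- Evaluation of a two-variable polynomial at `(z, w)`. -/
def pevalAt (p : CPoly2) (z w : ℂ) : ℂ := eval ![z, w] p

/-- The zero set `Z(p) ⊆ ℂ²`. -/
def zeroSet (p : CPoly2) : Set (ℂ × ℂ) := {x | pevalAt p x.1 x.2 = 0}

/-- The open bidisk `𝔻²`. -/
def biDisk : Set (ℂ × ℂ) := {x | ‖x.1‖ < 1 ∧ ‖x.2‖ < 1}

/-- `𝔙(p) = Z(p) ∩ 𝔻²`. -/
def distVar (p : CPoly2) : Set (ℂ × ℂ) := zeroSet p ∩ biDisk

/-- A polynomial is inner toral if its zero set lies in `𝔻² ∪ 𝕋² ∪ 𝔼²`. -/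
def InnerToral (p : CPoly2) : Prop :=
  ∀ z w : ℂ, pevalAt p z w = 0 →
    (‖z‖ < 1 ∧ ‖w‖ < 1) ∨
    (‖z‖ = 1 ∧ ‖w‖ = 1) ∨
    (1 < ‖z‖ ∧ 1 < ‖w‖)

/-- `p` and `q` are relatively prime: no non-constant polynomial divides both. -/
def RelPrime (p q : CPoly2) : Prop :=
  ∀ d : CPoly2, d ∣ p → d ∣ q → d.totalDegree = 0

/-- `p` is square free: the square of a non-constant polynomial never divides `p`. -/
def SqFree (p : CPoly2) : Prop :=
  ∀ d : CPoly2, 0 < d.totalDegree → ¬ d * d ∣ p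

/-- `(λ, μ)` is a regular point for `p`: `p(λ,μ) = 0` and `∇p(λ,μ) ≠ 0`. -/
def IsRegularPoint (p : CPoly2) (x : ℂ × ℂ) : Prop :=
  pevalAt p x.1 x.2 = 0 ∧
    (eval ![x.1, x.2] (pderiv (0 : Fin 2) p) ≠ 0 ∨
     eval ![x.1, x.2] (pderiv (1 : Fin 2) p) ≠ 0)

/-- The one-variable polynomial `p_λ(w) = p(λ, w)`. -/
def pSlice (p : CPoly2) (lam : ℂ) : Polynomial ℂ :=
  MvPolynomial.aeval ![Polynomial.C lam, Polynomial.X] p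

section Ops

variable {H : Type*} [NormedAddCommGroup H] [NormedSpace ℂ H]

/-- For `q(z,w) = Σ c_{ij} z^i w^j`, `polyOp q S T = q(S,T) = Σ c_{ij} S^i T^j`. -/
def polyOp (q : CPoly2) (S T : H →L[ℂ] H) : H →L[ℂ] H :=
  ∑ m ∈ q.support, q.coeff m • (S ^ (m 0) * T ^ (m 1))

/-- A pure isometry: an isometry with `⋂ₙ Vⁿ(H) = {0}`. -/
def IsPureIsometry (S : H →L[ℂ] H) : Prop :=
  (∀ x : H, ‖S x‖ = ‖x‖) ∧ (⋂ n : ℕ, Set.range (⇑(S ^ (n + 1)))) = ({0} : Set H)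

/-- A pure `p`-isopair: a commuting pair of pure isometries annihilated by `p`. -/
def IsPureIsopair (p : CPoly2) (S T : H →L[ℂ] H) : Prop :=
  Commute S T ∧ IsPureIsometry S ∧ IsPureIsometry T ∧ polyOp p S T = 0

/-- The set `{Σ_j q_j(S,T) f_j : q_j ∈ ℂ[z,w]}`. -/
def cyclicSet (S T : H →L[ℂ] H) {k : ℕ} (f : Fin k → H) : Set H :=
  {x | ∃ q : Fin k → CPoly2, x = ∑ j, polyOp (q j) S T (f j)}

/-- `(S,T)` is `k`-cyclic: some `f_1, …, f_k` have `closure {Σ q_j(S,T) f_j} = H`. -/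
def IsKCyclic (S T : H →L[ℂ] H) (k : ℕ) : Prop :=
  ∃ f : Fin k → H, closure (cyclicSet S T f) = Set.univ

/-- `(S,T)` is at most nearly `k`-cyclic: some `f_1, …, f_k` have
`closure {Σ q_j(S,T) f_j}` of finite codimension in `H`. -/
def AtMostNearlyKCyclic (S T : H →L[ℂ] H) (k : ℕ) : Prop :=
  ∃ f : Fin k → H,
    FiniteDimensional ℂ (H ⧸ (Submodule.span ℂ (cyclicSet S T f)).topologicalClosure)

/-- `(S,T)` is nearly `k`-cyclic: at most nearly `k`-cyclic but not `k'` for `k' < k`. -/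
def NearlyKCyclic (S T : H →L[ℂ] H) (k : ℕ) : Prop :=
  AtMostNearlyKCyclic S T k ∧ ∀ k' < k, ¬ AtMostNearlyKCyclic S T k'

/-- Restriction of a continuous linear operator to an invariant subspace. -/
def clmRestrict (S : H →L[ℂ] H) (E : Submodule ℂ H) (h : ∀ x ∈ E, S x ∈ E) : E →L[ℂ] E :=
  { toLinearMap := (S : H →ₗ[ℂ] H).restrict h
    cont := by exact Continuous.subtype_mk (S.continuous.comp continuous_subtype_val) _ }

end Ops

/-- Unitary equivalence of pairs: a unitary `U` with `U S₁ = S₂ U` and `U T₁ = T₂ U`. -/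
def UnitarilyEquivPairs {H1 H2 : Type*} [NormedAddCommGroup H1] [NormedSpace ℂ H1]
    [NormedAddCommGroup H2] [NormedSpace ℂ H2]
    (S1 T1 : H1 →L[ℂ] H1) (S2 T2 : H2 →L[ℂ] H2) : Prop :=
  ∃ U : H1 ≃ₗᵢ[ℂ] H2, (∀ x, U (S1 x) = S2 (U x)) ∧ (∀ x, U (T1 x) = T2 (U x))

section Hilbert

variable {H : Type*} [NormedAddCommGroup H] [InnerProductSpace ℂ H] [CompleteSpace H]

/-- The multiplicity of an isometry: `dim ker V*`. -/
def multiplicity' (S : H →L[ℂ] H) : Cardinal :=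
  Module.rank ℂ (LinearMap.ker (ContinuousLinearMap.adjoint S : H →ₗ[ℂ] H))

/-- Finite bimultiplicity: both `mult S` and `mult T` are finite. -/
def FiniteBimult (S T : H →L[ℂ] H) : Prop :=
  multiplicity' S < Cardinal.aleph0 ∧ multiplicity' T < Cardinal.aleph0

/-- `dim (ker (S - λ)* ∩ ker (T - μ)*)`. -/
def jointKerDim (S T : H →L[ℂ] H) (lam mu : ℂ) : Cardinal :=
  Module.rank ℂ
    ↥(LinearMap.ker (ContinuousLinearMap.adjoint (S - lam • 1) : H →ₗ[ℂ] H) ⊓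
      LinearMap.ker (ContinuousLinearMap.adjoint (T - mu • 1) : H →ₗ[ℂ] H))

/-- `(S,T)` has rank `α`: for each `j` and every regular point `(λ,μ)` of `p` in `𝔙(p_j)`,
`dim (ker (S-λ)* ∩ ker (T-μ)*) = α_j`. -/
def HasRank (p : CPoly2) {s : ℕ} (ps : Fin s → CPoly2) (S T : H →L[ℂ] H)
    (α : Fin s → ℕ) : Prop :=
  ∀ j : Fin s, ∀ x : ℂ × ℂ, x ∈ distVar (ps j) → IsRegularPoint p x →
    jointKerDim S T x.1 x.2 = (α j : Cardinal)

/-- Rank for an isopair attached to a single irreducible polynomial. -/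
def HasRankIrred (p : CPoly2) (S T : H →L[ℂ] H) (a : ℕ) : Prop :=
  ∀ x : ℂ × ℂ, x ∈ distVar p → IsRegularPoint p x →
    jointKerDim S T x.1 x.2 = (a : Cardinal)

end Hilbert

/-- A pair of operators acting on some complex Hilbert space. -/
structure HilbertPair where
  space : Type*
  [nacg : NormedAddCommGroup space]
  [ips : InnerProductSpace ℂ space]
  [cs : CompleteSpace space]
  S : space →L[ℂ] space
  T : space →L[ℂ] space

attribute [instance] HilbertPair.nacg HilbertPair.ips HilbertPair.cs

/-!
Viewing `ℂ[z,w]` as `ℂ[z][w]`, Gauss's lemma keeps `p` and `q` coprime over `ℂ(z)`. A Bézout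
identity there, with denominators cleared, puts a nonzero polynomial in `z` alone into the ideal
`(p, q)`, and likewise one in `w` alone. So `z` and `w` are algebraic over `ℂ` in
`ℂ[z,w] ⧸ (p, q)`, which is therefore finite-dimensional; any complement of the ideal is `R`.
-/

open Polynomial.Bivariate
open scoped nonZeroDivisors

namespace Polynomial

section FractionRing

variable {R : Type*} [CommRing R] [IsDomain R] [NormalizedGCDMonoid R]

theorem IsRelPrime.map_fractionRing {K : Type*} [Field K] [Algebra R K] [IsFractionRing R K]
    {P Q : R[X]} (h : IsRelPrime P Q) :
    IsRelPrime (P.map (algebraMap R K)) (Q.map (algebraMap R K)) := by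
  intro d hdP hdQ
  have hd : d ≠ 0 := by
    rintro rfl
    have hP : P = 0 := map_injective _ (IsFractionRing.injective R K) (by simpa using hdP)
    have hQ : Q = 0 := map_injective _ (IsFractionRing.injective R K) (by simpa using hdQ)
    subst hP hQ
    exact not_isUnit_X (h (dvd_zero X) (dvd_zero X))
  -- `d` is, up to a unit of `K[X]`, the image of the primitive polynomial `d'`.
  set d' := (IsLocalization.integerNormalization R⁰ d).primPart
  have hd' : d'.map (algebraMap R K) ∣ d := by
    obtain ⟨b, hb, hbd⟩ := IsLocalization.integerNormalization_spec R⁰ d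
    have hb0 : IsUnit (C (algebraMap R K b)) :=
      isUnit_C.mpr (IsFractionRing.to_map_ne_zero_of_mem_nonZeroDivisors hb).isUnit
    rw [← hb0.dvd_mul_left, ← algebraMap_apply, ← Algebra.smul_def, ← hbd]
    exact map_dvd _ (primPart_dvd _)
  refine isUnit_or_eq_zero_of_isUnit_integerNormalization_primPart hd (h ?_ ?_)
  · exact (isPrimitive_primPart _).dvd_of_fraction_map_dvd_fraction_map (hd'.trans hdP)
  · exact (isPrimitive_primPart _).dvd_of_fraction_map_dvd_fraction_map (hd'.trans hdQ)

/-- Bézout's identity over the field of fractions, with the denominators cleared. -/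
theorem exists_C_mem_span_pair_of_isRelPrime {P Q : R[X]} (h : IsRelPrime P Q) :
    ∃ c : R, c ≠ 0 ∧ C c ∈ Ideal.span {P, Q} := by
  let K := FractionRing R
  let _ := Polynomial.algebra (R := R) (A := K)
  have _ := Polynomial.isLocalization R⁰ K
  have hcop : IsCoprime (P.map (algebraMap R K)) (Q.map (algebraMap R K)) :=
    (IsRelPrime.map_fractionRing (K := K) h).isCoprime
  have h1 : algebraMap R[X] K[X] 1 ∈ (Ideal.span {P, Q}).map (algebraMap R[X] K[X]) := by
    rw [Ideal.map_span, Set.image_pair, map_one, Ideal.mem_span_pair]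
    exact hcop
  obtain ⟨_, ⟨c, hc, rfl⟩, hmem⟩ :=
    (IsLocalization.algebraMap_mem_map_algebraMap_iff (R⁰.map C) K[X] _ 1).mp h1
  exact ⟨c, nonZeroDivisors.ne_zero hc, by simpa using hmem⟩

end FractionRing

theorem _root_.AlgEquiv.apply_C_eq_aeval {R A : Type*} [CommSemiring R] [Semiring A]
    [Algebra R A] (E : R[X][Y] ≃ₐ[R] A) (c : R[X]) : E (C c) = aeval (E (C X)) c := by
  have : (E : R[X][Y] →ₐ[R] A).comp CAlgHom = aeval (E (C X)) := algHom_ext (by simp)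
  exact DFunLike.congr_fun this c

theorem exists_aeval_mem_span_pair_of_isRelPrime {k A : Type*} [Field k] [CommRing A]
    [Algebra k A] (E : k[X][Y] ≃ₐ[k] A) {p q : A}
    (h : IsRelPrime p q) : ∃ c : k[X], c ≠ 0 ∧ aeval (E (C X)) c ∈ Ideal.span {p, q} := by
  classical
  obtain ⟨c, hc, hmem⟩ := exists_C_mem_span_pair_of_isRelPrime
    (IsRelPrime.of_map E (by simpa using h) : IsRelPrime (E.symm p) (E.symm q))
  refine ⟨c, hc, ?_⟩
  have := Ideal.mem_map_of_mem E hmem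
  rwa [Ideal.map_span, Set.image_pair, AlgEquiv.apply_symm_apply, AlgEquiv.apply_symm_apply,
    E.apply_C_eq_aeval] at this

end Polynomial

namespace MvPolynomial

variable {k : Type*} [Field k]

theorem isAlgebraic_mk_X_of_isRelPrime {p q : MvPolynomial (Fin 2) k} (h : IsRelPrime p q)
    (i : Fin 2) : IsAlgebraic k (Ideal.Quotient.mk (Ideal.span {p, q}) (X i)) := by
  obtain ⟨E, hE⟩ : ∃ E : k[X][Y] ≃ₐ[k] MvPolynomial (Fin 2) k, E (.C .X) = X i := by
    fin_cases i
    · exact ⟨equivMvPolynomial k, by simp⟩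
    · exact ⟨swap.trans (equivMvPolynomial k), by simp [swap_X]⟩
  obtain ⟨c, hc, hmem⟩ := Polynomial.exists_aeval_mem_span_pair_of_isRelPrime E h
  refine ⟨c, hc, ?_⟩
  rw [hE] at hmem
  rwa [← Ideal.Quotient.mkₐ_eq_mk k, Polynomial.aeval_algHom_apply, Ideal.Quotient.mkₐ_eq_mk,
    Ideal.Quotient.eq_zero_iff_mem]

theorem finite_quotient_of_isAlgebraic {σ : Type*} [Finite σ] (I : Ideal (MvPolynomial σ k))
    (h : ∀ i, IsAlgebraic k (Ideal.Quotient.mk I (X i))) :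
    Module.Finite k (MvPolynomial σ k ⧸ I) := by
  have : Algebra.IsIntegral k (MvPolynomial σ k ⧸ I) := by
    refine ⟨fun x => ?_⟩
    obtain ⟨f, rfl⟩ := Ideal.Quotient.mk_surjective x
    induction f using MvPolynomial.induction_on with
    | C a => exact isIntegral_algebraMap (x := a)
    | add f g hf hg => rw [map_add]; exact hf.add hg
    | mul_X f i hf => rw [map_mul]; exact hf.mul (h i).isIntegral
  exact Algebra.IsIntegral.finite

end MvPolynomial

theorem RelPrime.isRelPrime {p q : CPoly2} (h : RelPrime p q) : IsRelPrime p q := by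
  intro d hdp hdq
  have hd := totalDegree_eq_zero_iff_eq_C.mp (h d hdp hdq)
  rcases eq_or_ne (coeff 0 d) 0 with h0 | h0
  · rw [hd, h0, map_zero, zero_dvd_iff] at hdp hdq
    subst hdp hdq
    simpa using h (X 0) (dvd_zero _) (dvd_zero _)
  · rw [hd]
    exact h0.isUnit.map C

theorem statement1_general (p q : CPoly2) (hpq : RelPrime p q) :
    ∃ R : Submodule ℂ CPoly2, FiniteDimensional ℂ R ∧
      ∀ ψ : CPoly2, ∃ s t : CPoly2, ∃ r ∈ R, ψ = s * p + t * q + r := by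
  set I := Ideal.span {p, q}
  have : Module.Finite ℂ (CPoly2 ⧸ I) :=
    finite_quotient_of_isAlgebraic I (isAlgebraic_mk_X_of_isRelPrime hpq.isRelPrime)
  have : FiniteDimensional ℂ (CPoly2 ⧸ I.restrictScalars ℂ) :=
    Module.Finite.equiv (Submodule.Quotient.restrictScalarsEquiv ℂ I).symm
  obtain ⟨R, hR⟩ := (I.restrictScalars ℂ).exists_isCompl
  refine ⟨R, (Submodule.quotientEquivOfIsCompl _ R hR).finiteDimensional, fun ψ => ?_⟩
  obtain ⟨x, hx, r, hr, rfl⟩ := Submodule.mem_sup.mp (hR.sup_eq_top ▸ Submodule.mem_top (x := ψ))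
  obtain ⟨s, t, rfl⟩ := Ideal.mem_span_pair.mp hx
  exact ⟨s, t, r, hr, rfl⟩

/-- the ideal generated by relatively prime nonzero `p, q` has finite
codimension in `ℂ[z,w]`. -/
theorem statement1 (p q : CPoly2) (hp : p ≠ 0) (hq : q ≠ 0) (hpq : RelPrime p q) :
    ∃ R : Submodule ℂ CPoly2, FiniteDimensional ℂ R ∧
      ∀ ψ : CPoly2, ∃ s t : CPoly2, ∃ r ∈ R, ψ = s * p + t * q + r :=
  statement1_general p q hpq
end
end

section
/- Suppose p ∈ ℂ[z,w] is square free and inner toral. If q ∈ ℂ[z,w] is nonzero and q vanishes at all but finitely many points of 𝔙(p), then p divides q. -/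
noncomputable section

open MvPolynomial

/-!
If `p ∤ q`, then, `p` being squarefree, some prime factor `r` of `p` does not divide `q`.
Viewing `r` and `q` as polynomials in `z` over `ℂ[w]`, their resultant is a polynomial in `w`
lying in the ideal `(r, q)`; it is nonzero by Gauss's lemma, so `r` and `q` have only finitely
many common zeros. On the other hand `r` is inner toral, so for every `w ∈ 𝔻` outside the
finitely many zeros of its leading `z`-coefficient, `r(·, w)` has a root, necessarily in `𝔻`:
`𝔙(r) ⊆ 𝔙(p)` is infinite, and `q` cannot vanish on all but finitely many of its points.
-/

theorem Squarefree.dvd_of_forall_prime_dvd {α : Type*} [CommMonoidWithZero α]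
    [UniqueFactorizationMonoid α] {p q : α} (hp : Squarefree p)
    (h : ∀ r, Prime r → r ∣ p → r ∣ q) : p ∣ q := by
  nontriviality α
  induction p using UniqueFactorizationMonoid.induction_on_prime with
  | h₁ => exact absurd hp not_squarefree_zero
  | h₂ u hu => exact hu.dvd
  | h₃ a r _ hr ih =>
    exact (IsRelPrime.of_squarefree_mul hp).mul_dvd (h r hr (dvd_mul_right r a))
      (ih hp.of_mul_right fun s hs hsa => h s hs (hsa.mul_left r))

theorem Polynomial.resultant_ne_zero_of_irreducible {R : Type*} [CommRing R] [IsDomain R]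
    [IsGCDMonoid R] {f g : Polynomial R} (hf : Irreducible f) (hdeg : f.natDegree ≠ 0)
    (hfg : ¬ f ∣ g) : f.resultant g ≠ 0 := by
  let φ := algebraMap R (FractionRing R)
  have hφ : Function.Injective φ := IsFractionRing.injective R (FractionRing R)
  have hprim : f.IsPrimitive := hf.isPrimitive hdeg
  have hcop : IsCoprime (f.map φ) (g.map φ) :=
    (hprim.irreducible_iff_irreducible_map_fraction_map.mp hf).coprime_iff_not_dvd.mpr
      fun h => hfg (hprim.dvd_of_fraction_map_dvd_fraction_map h)
  have hres := Polynomial.resultant_ne_zero _ _ hcop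
  rw [Polynomial.natDegree_map_eq_of_injective hφ, Polynomial.natDegree_map_eq_of_injective hφ,
    Polynomial.resultant_map_map] at hres
  exact fun h => hres (by rw [h, map_zero])

theorem MvPolynomial.finite_setOf_eval_eq_zero {k : Type*} [Field k] [Infinite k]
    {c : MvPolynomial (Fin 1) k} (hc : c ≠ 0) : {w : k | eval ![w] c = 0}.Finite := by
  have hval (d : MvPolynomial (Fin 1) k) (w : k) :
      eval ![w] d = (aeval (fun _ => Polynomial.X) d).eval w := by
    induction d using MvPolynomial.induction_on with
    | C a => simp
    | add p q hp hq => simp [hp, hq]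
    | mul_X p i hp => simp [hp, Fin.fin_one_eq_zero i]
  have hne : aeval (fun _ => (Polynomial.X : Polynomial k)) c ≠ 0 := by
    refine fun h0 => hc (MvPolynomial.funext fun x => ?_)
    have hx : x = ![x 0] := by ext i; fin_cases i; rfl
    rw [hx, hval, h0]; simp
  simp_rw [hval]
  exact Polynomial.finite_setOfPred_isRoot hne

theorem MvPolynomial.isUnit_of_forall_eval_ne_zero {k σ : Type*} [Field k] [IsAlgClosed k]
    [Finite σ] {c : MvPolynomial σ k} (hc : ∀ x, eval x c ≠ 0) : IsUnit c := by
  have hzero : zeroLocus k (Ideal.span {c}) = ∅ := by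
    ext x
    simpa [zeroLocus_span] using hc x
  have hrad := vanishingIdeal_zeroLocus_eq_radical (K := k) (Ideal.span {c})
  rwa [hzero, vanishingIdeal_empty, eq_comm, Ideal.radical_eq_top,
    Ideal.span_singleton_eq_top] at hrad

lemma pevalAt_eq_zero_of_dvd {r p : CPoly2} (hrp : r ∣ p) {z w : ℂ} (h : pevalAt r z w = 0) :
    pevalAt p z w = 0 := by
  obtain ⟨t, rfl⟩ := hrp
  rw [pevalAt, map_mul, ← pevalAt, h, zero_mul]

lemma pevalAt_eq_eval_map_finSuccEquiv (p : CPoly2) (z w : ℂ) :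
    pevalAt p z w = ((finSuccEquiv ℂ 1 p).map (eval ![w])).eval z :=
  eval_eq_eval_mv_eval' ![w] z p

lemma SqFree.squarefree {p : CPoly2} (hsf : SqFree p) (hp : p ≠ 0) : Squarefree p := by
  intro d hd
  rcases Nat.eq_zero_or_pos d.totalDegree with h0 | hpos
  · rw [totalDegree_eq_zero_iff_eq_C] at h0
    rw [h0] at hd ⊢
    refine (isUnit_iff_ne_zero.mpr fun hc => hp ?_).map C
    simpa [hc] using hd
  · exact absurd hd (hsf d hpos)

lemma distVar_subset_of_dvd {r p : CPoly2} (hrp : r ∣ p) : distVar r ⊆ distVar p :=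
  fun _ hx => ⟨pevalAt_eq_zero_of_dvd hrp hx.1, hx.2⟩

lemma InnerToral.of_dvd {p r : CPoly2} (hit : InnerToral p) (hrp : r ∣ p) : InnerToral r :=
  fun z w h => hit z w (pevalAt_eq_zero_of_dvd hrp h)

lemma InnerToral.exists_pevalAt_ne_zero {p : CPoly2} (hit : InnerToral p) (w : ℂ) :
    ∃ z, pevalAt p z w ≠ 0 := by
  by_contra! h
  have h0 := hit 0 w (h 0)
  have h2 := hit 2 w (h 2)
  norm_num at h0 h2
  linarith

lemma InnerToral.ne_zero {p : CPoly2} (hit : InnerToral p) : p ≠ 0 := by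
  rintro rfl
  obtain ⟨z, hz⟩ := hit.exists_pevalAt_ne_zero 0
  simp [pevalAt] at hz

lemma finite_setOf_pevalAt_eq_zero {p : CPoly2} {w : ℂ} (h : ∃ z, pevalAt p z w ≠ 0) :
    {z | pevalAt p z w = 0}.Finite := by
  simp_rw [pevalAt_eq_eval_map_finSuccEquiv] at h ⊢
  obtain ⟨z, hz⟩ := h
  exact Polynomial.finite_setOfPred_isRoot fun h0 => hz (by rw [h0, Polynomial.eval_zero])

lemma natDegree_finSuccEquiv_pos {p : CPoly2} (hp : ¬ IsUnit p)
    (hline : ∀ w, ∃ z, pevalAt p z w ≠ 0) : 0 < (finSuccEquiv ℂ 1 p).natDegree := by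
  by_contra! h
  -- Otherwise `p` depends on `w` alone, so it has no zeros and the Nullstellensatz applies.
  have hC := Polynomial.eq_C_of_natDegree_le_zero h
  have hconst (z z' w : ℂ) : pevalAt p z w = pevalAt p z' w := by
    simp only [pevalAt_eq_eval_map_finSuccEquiv]
    rw [hC]; simp
  refine hp (isUnit_of_forall_eval_ne_zero fun x => ?_)
  obtain ⟨z, hz⟩ := hline (x 1)
  have hx : x = ![x 0, x 1] := by ext i; fin_cases i <;> rfl
  rw [hx, ← pevalAt, hconst (x 0) z]
  exact hz

lemma finite_zeroSet_inter_of_not_dvd {r q : CPoly2} (hr : Irreducible r)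
    (hline : ∀ w, ∃ z, pevalAt r z w ≠ 0) (hrq : ¬ r ∣ q) :
    (zeroSet r ∩ zeroSet q).Finite := by
  set f := finSuccEquiv ℂ 1 r
  set g := finSuccEquiv ℂ 1 q
  have hdeg : 0 < f.natDegree := natDegree_finSuccEquiv_pos hr.not_isUnit hline
  have hfg : ¬ f ∣ g := fun h => hrq (by simpa [f, g] using map_dvd (finSuccEquiv ℂ 1).symm h)
  have hres : f.resultant g ≠ 0 :=
    Polynomial.resultant_ne_zero_of_irreducible ((MulEquiv.irreducible_iff _).mpr hr) hdeg.ne' hfg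
  obtain ⟨a, b, -, -, hab⟩ :=
    Polynomial.exists_mul_add_mul_eq_C_resultant f g le_rfl le_rfl (Or.inl hdeg.ne')
  refine ((finite_setOf_eval_eq_zero hres).biUnion fun w _ =>
    (finite_setOf_pevalAt_eq_zero (hline w)).image (·, w)).subset ?_
  rintro ⟨z, w⟩ ⟨hrz, hqz⟩
  refine Set.mem_biUnion (x := w) ?_ ⟨z, hrz, rfl⟩
  have hfz : (f.map (eval ![w])).eval z = 0 :=
    (pevalAt_eq_eval_map_finSuccEquiv r z w).symm.trans hrz
  have hgz : (g.map (eval ![w])).eval z = 0 :=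
    (pevalAt_eq_eval_map_finSuccEquiv q z w).symm.trans hqz
  have := congrArg (fun P => (P.map (eval ![w])).eval z) hab
  simpa [hfz, hgz, eq_comm] using this

lemma InnerToral.distVar_infinite {r : CPoly2} (hit : InnerToral r) (hr : ¬ IsUnit r) :
    (distVar r).Infinite := by
  set f := finSuccEquiv ℂ 1 r
  have hdeg : 0 < f.natDegree := natDegree_finSuccEquiv_pos hr hit.exists_pevalAt_ne_zero
  have hlc : f.leadingCoeff ≠ 0 := by simpa [f] using hit.ne_zero
  have hdisk : (Metric.ball (0 : ℂ) 1).Infinite :=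
    infinite_of_mem_nhds 0 (Metric.ball_mem_nhds 0 one_pos)
  refine fun hfin => (hdisk.sdiff (finite_setOf_eval_eq_zero hlc)).mono ?_ (hfin.image Prod.snd)
  rintro w ⟨hw, hwlc⟩
  rw [mem_ball_zero_iff] at hw
  have hslice : 0 < (f.map (eval ![w])).degree := by
    rwa [Polynomial.degree_map_eq_of_leadingCoeff_ne_zero _ hwlc,
      ← Polynomial.natDegree_pos_iff_degree_pos]
  obtain ⟨z, hz⟩ := Complex.exists_root hslice
  have hzero : pevalAt r z w = 0 := by rwa [pevalAt_eq_eval_map_finSuccEquiv]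
  have hz : ‖z‖ < 1 := by
    rcases hit z w hzero with ⟨h, _⟩ | ⟨_, h⟩ | ⟨_, h⟩ <;> linarith
  exact ⟨(z, w), ⟨hzero, hz, hw⟩, rfl⟩

theorem statement3_general (p : CPoly2) (hsf : SqFree p) (hit : InnerToral p)
    (q : CPoly2)
    (hvan : {x ∈ distVar p | pevalAt q x.1 x.2 ≠ 0}.Finite) :
    p ∣ q := by
  refine (hsf.squarefree hit.ne_zero).dvd_of_forall_prime_dvd fun r hr hrp => ?_
  by_contra hrq
  have hitr := hit.of_dvd hrp
  have hfin := hvan.union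
    (finite_zeroSet_inter_of_not_dvd hr.irreducible hitr.exists_pevalAt_ne_zero hrq)
  refine hitr.distVar_infinite hr.not_isUnit (hfin.subset fun x hx => ?_)
  by_cases hqx : pevalAt q x.1 x.2 = 0
  · exact Or.inr ⟨hx.1, hqx⟩
  · exact Or.inl ⟨distVar_subset_of_dvd hrp hx, hqx⟩

/-- if `q ≠ 0` vanishes at all but finitely many points of `𝔙(p)`,
then `p ∣ q`. -/
theorem statement3 (p : CPoly2) (hsf : SqFree p) (hit : InnerToral p)
    (q : CPoly2) (hq : q ≠ 0)
    (hvan : {x ∈ distVar p | pevalAt q x.1 x.2 ≠ 0}.Finite) :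
    p ∣ q :=
  statement3_general p hsf hit q hvan
end
end

section
/- Suppose p ∈ ℂ[z,w] is square free and inner toral and q ∈ ℂ[z,w] is nonzero. If Z(q) ∩ Z(p) ∩ 𝔻² is a finite set, then q and p are relatively prime. -/
noncomputable section

open MvPolynomial

/-! A common non-constant factor `d` of `q` and `p` vanishes on a curve inside `Z(p)`. As `p` is
inner toral, `Z(p)` contains no vertical line `{c} × ℂ` (it would meet both `|w| < 1` and
`|w| > 1`), so over an algebraically closed field `d(z, ·)` has a root for all but finitely many
`z`. Taking those `z` in `𝔻` and using again that `p` is inner toral, the roots `w` lie in `𝔻`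
as well, so `Z(q) ∩ Z(p) ∩ 𝔻²` projects onto a cofinite subset of `𝔻` and is infinite. -/

namespace Polynomial.Bivariate

variable {K : Type*} [Field K] [IsAlgClosed K]

theorem finite_setOf_forall_evalEval_ne_zero {g : K[X][Y]} (hg : ∀ c, g ≠ CC c)
    (hline : ∀ x, ∃ y, g.evalEval x y ≠ 0) : {x | ∀ y, g.evalEval x y ≠ 0}.Finite := by
  rcases Nat.eq_zero_or_pos g.natDegree with hdeg | hdeg
  · -- `g = C a` does not involve `y`, so a root of `a` gives a vertical line in the zero set
    obtain ⟨a, rfl⟩ := natDegree_eq_zero.mp hdeg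
    have ha : 0 < a.degree := by
      by_contra! ha
      exact hg (a.coeff 0) (congrArg C (eq_C_of_degree_le_zero ha))
    obtain ⟨x, hx⟩ := IsAlgClosed.exists_root a ha.ne'
    obtain ⟨y, hy⟩ := hline x
    exact absurd (by simpa [evalEval_C] using hx) hy
  · -- away from the roots of the leading coefficient, `g(x, ·)` keeps its positive degree
    have hg0 : g ≠ 0 := by
      rintro rfl
      simp at hdeg
    refine (finite_setOfPred_isRoot (leadingCoeff_ne_zero.mpr hg0)).subset fun x hx => ?_
    by_contra hlc
    replace hlc : evalRingHom x g.leadingCoeff ≠ 0 := hlc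
    have hdeg' : 0 < (g.map (evalRingHom x)).degree := by
      rw [degree_map_eq_of_leadingCoeff_ne_zero _ hlc]
      exact natDegree_pos_iff_degree_pos.mp hdeg
    obtain ⟨y, hy⟩ := IsAlgClosed.exists_root _ hdeg'.ne'
    exact hx y (by rwa [← map_evalRingHom_eval])

end Polynomial.Bivariate

namespace MvPolynomial

open Polynomial.Bivariate

theorem eval_equivMvPolynomial {R : Type*} [CommSemiring R] (g : R[X][Y])
    (x y : R) : eval ![x, y] (equivMvPolynomial R g) = g.evalEval x y := by
  rw [← Polynomial.coe_aevalAeval_eq_evalEval, ← coe_aeval_eq_eval]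
  show ((aeval ![x, y]).comp (equivMvPolynomial R).toAlgHom) g = _
  congr 1
  ext <;> simp

theorem finite_setOf_forall_eval_ne_zero {K : Type*} [Field K] [IsAlgClosed K]
    {d : MvPolynomial (Fin 2) K} (hd : d.totalDegree ≠ 0)
    (hline : ∀ x, ∃ y, eval ![x, y] d ≠ 0) : {x | ∀ y, eval ![x, y] d ≠ 0}.Finite := by
  obtain ⟨g, rfl⟩ := (equivMvPolynomial K).surjective d
  simp only [eval_equivMvPolynomial] at hline ⊢
  refine finite_setOf_forall_evalEval_ne_zero (fun c hc => hd ?_) hline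
  rw [hc, equivMvPolynomial_C_C, totalDegree_C]

end MvPolynomial

namespace InnerToral

variable {p : CPoly2}

theorem norm_lt_one_of_norm_lt_one (hp : InnerToral p) {z w : ℂ} (h : pevalAt p z w = 0)
    (hz : ‖z‖ < 1) : ‖w‖ < 1 := by
  rcases hp z w h with h | h | h
  exacts [h.2, by linarith [h.1], by linarith [h.1]]

theorem exists_pevalAt_ne_zero_s4 (hp : InnerToral p) (z : ℂ) : ∃ w, pevalAt p z w ≠ 0 := by
  by_contra! h
  have hlt : ‖z‖ < 1 := by
    rcases hp z 0 (h 0) with h0 | h0 | h0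
    exacts [h0.1, by norm_num at h0, by norm_num at h0]
  have hgt : 1 < ‖z‖ := by
    rcases hp z 2 (h 2) with h2 | h2 | h2
    exacts [by norm_num at h2, by norm_num at h2, h2.1]
  linarith

end InnerToral

theorem statement4_general (p q : CPoly2) (hit : InnerToral p)
    (hfin : (zeroSet q ∩ zeroSet p ∩ biDisk).Finite) :
    RelPrime q p := by
  intro d hdq hdp
  by_contra hd
  have hvanish {f : CPoly2} (hf : d ∣ f) {z w : ℂ} (h : pevalAt d z w = 0) : pevalAt f z w = 0 :=
    zero_dvd_iff.mp (h ▸ map_dvd (eval ![z, w]) hf)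
  have hline (z : ℂ) : ∃ w, pevalAt d z w ≠ 0 := by
    obtain ⟨w, hw⟩ := hit.exists_pevalAt_ne_zero_s4 z
    exact ⟨w, mt (hvanish hdp) hw⟩
  have hcofinite := MvPolynomial.finite_setOf_forall_eval_ne_zero hd hline
  have hsub : Metric.ball (0 : ℂ) 1 \ {x | ∀ y, eval ![x, y] d ≠ 0} ⊆
      Prod.fst '' (zeroSet q ∩ zeroSet p ∩ biDisk) := by
    rintro z ⟨hz, hroot⟩
    obtain ⟨w, hw⟩ : ∃ w, eval ![z, w] d = 0 := by simpa using hroot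
    rw [mem_ball_zero_iff] at hz
    have hp : pevalAt p z w = 0 := hvanish hdp hw
    exact ⟨(z, w), ⟨⟨hvanish hdq hw, hp⟩, hz, hit.norm_lt_one_of_norm_lt_one hp hz⟩, rfl⟩
  exact (((infinite_of_mem_nhds 0 (Metric.ball_mem_nhds 0 one_pos)).sdiff hcofinite).mono hsub)
    (hfin.image _)

/-- if `Z(q) ∩ Z(p) ∩ 𝔻²` is finite, then `q` and `p` are relatively prime. -/
theorem statement4 (p q : CPoly2) (hsf : SqFree p) (hit : InnerToral p) (hq : q ≠ 0)
    (hfin : (zeroSet q ∩ zeroSet p ∩ biDisk).Finite) :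
    RelPrime q p :=
  statement4_general p q hit hfin
end
end

section
/- Let p ∈ ℂ[z,w] be square free and inner toral. Suppose V = (S,T) is a pure p-isopair of finite bimultiplicity acting on a Hilbert space K. If H is a closed V-invariant subspace of K of finite codimension and W is the restriction of V to H, then there exists a closed W-invariant subspace L of H of finite codimension such that V is unitarily equivalent to the restriction of W to L. -/
noncomputable section

open MvPolynomial

/-!
Write `S̄` for the operator induced by `S` on the finite-dimensional space `K ⧸ E`. If `λ` is an
eigenvalue of `S̄`, then `(S - λ)K + E ≠ K`, and a nonzero vector orthogonal to it is an
eigenvector of `S*` for `λ̄`. As `S*` is a contraction, `|λ| ≥ 1` forces `|λ| = 1`, and then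
`f = S S* f = S (λ̄ f)` for every such eigenvector `f`; iterating, `f ∈ ⋂ₙ Sⁿ K = 0`. So the roots
`aᵢ` of the minimal polynomial `m` of `S̄` lie in the open disc. Since
`‖(S - a)y‖ = ‖(1 - ā S)y‖`, the Blaschke product `J = ∏ (S - aᵢ)(1 - āᵢ S)⁻¹` is an isometry,
and it commutes with everything commuting with `S`. Its range is `m(S) K`, which lies in `E`
because `m(S̄) = 0`, and has finite codimension because `K = (S - a)K + ker S*` when `|a| < 1`.
So `J` is a unitary from `K` onto the closed invariant subspace `J K` of `E` intertwining `(S, T)`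
with their restrictions.
-/

open ContinuousLinearMap
open Polynomial (aeval)
open scoped Polynomial InnerProductSpace InnerProduct

theorem Module.Finite.quotient_range_comp {R M N P : Type*} [Ring R]
    [AddCommGroup M] [Module R M] [AddCommGroup N] [Module R N] [AddCommGroup P] [Module R P]
    {f : N →ₗ[R] P} {g : M →ₗ[R] N}
    [Module.Finite R (P ⧸ LinearMap.range f)] [Module.Finite R (N ⧸ LinearMap.range g)] :
    Module.Finite R (P ⧸ LinearMap.range (f ∘ₗ g)) := by
  have hg : LinearMap.range g ≤ (LinearMap.range (f ∘ₗ g)).comap f := by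
    rintro _ ⟨x, rfl⟩
    exact ⟨x, rfl⟩
  have hexact : Function.Exact ((LinearMap.range g).mapQ _ f hg)
      (Submodule.factor (LinearMap.range_comp_le_range g f)) := by
    intro y
    induction y using Submodule.Quotient.induction_on with | _ y => ?_
    rw [← Submodule.mkQ_apply, Submodule.factor_mk, Submodule.mkQ_apply,
      Submodule.Quotient.mk_eq_zero]
    constructor
    · rintro ⟨x, rfl⟩
      exact ⟨Submodule.Quotient.mk x, rfl⟩
    · rintro ⟨x, hx⟩
      induction x using Submodule.Quotient.induction_on with | _ x => ?_
      rw [Submodule.mapQ_apply, Submodule.mkQ_apply, Submodule.Quotient.eq] at hx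
      obtain ⟨m, hm⟩ := hx
      exact ⟨x - g m, by rw [map_sub, ← LinearMap.comp_apply, hm, sub_sub_cancel]⟩
  exact Module.Finite.of_exact hexact (Submodule.factor_surjective _)

theorem Submodule.mkQ_aeval {R M : Type*} [CommRing R] [AddCommGroup M] [Module R M]
    (E : Submodule R M) {f : Module.End R M} (hf : E ≤ E.comap f) (p : R[X]) (x : M) :
    E.mkQ (aeval f p x) = aeval (E.mapQ E f hf) p (E.mkQ x) := by
  induction p using Polynomial.induction_on' with
  | add p q hp hq => simp only [map_add, LinearMap.add_apply, hp, hq]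
  | monomial n c => simp [← E.mapQ_pow hf n, Submodule.mapQ_apply]

theorem Commute.aeval_right {R A : Type*} [CommSemiring R] [Semiring A] [Algebra R A]
    {a b : A} (h : Commute a b) (p : R[X]) : Commute a (aeval b p) :=
  Algebra.commute_of_mem_adjoin_singleton_of_commute (Polynomial.aeval_mem_adjoin_singleton R b) h

theorem ContinuousLinearMap.toLinearMap_aeval {R M : Type*} [CommRing R] [AddCommGroup M]
    [Module R M] [TopologicalSpace M] [IsTopologicalAddGroup M] [ContinuousConstSMul R M]
    (S : M →L[R] M) (p : R[X]) :
    (aeval S p : M →ₗ[R] M) = aeval (S : M →ₗ[R] M) p := by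
  induction p using Polynomial.induction_on' with
  | add p q hp hq => simp [hp, hq]
  | monomial n c => simp [Algebra.algebraMap_eq_smul_one]

section Isometry

variable {K : Type*} [NormedAddCommGroup K] [InnerProductSpace ℂ K] {S : K →L[ℂ] K}

theorem norm_le_one_of_norm_map (hS : ∀ x, ‖S x‖ = ‖x‖) : ‖S‖ ≤ 1 :=
  S.opNorm_le_bound zero_le_one fun x => by rw [hS, one_mul]

variable [CompleteSpace K]

theorem adjoint_apply_apply_of_norm_map (hS : ∀ x, ‖S x‖ = ‖x‖) (x : K) : (S†) (S x) = x := by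
  simpa using congr($(S.norm_map_iff_adjoint_comp_self.1 hS) x)

theorem apply_adjoint_apply_of_norm_adjoint_apply (hS : ∀ x, ‖S x‖ = ‖x‖) {f : K}
    (hf : ‖(S†) f‖ = ‖f‖) : S ((S†) f) = f := by
  have hinner : ⟪S ((S†) f), f⟫_ℂ = ⟪(S†) f, (S†) f⟫_ℂ := (adjoint_inner_right _ _ _).symm
  rw [← sub_eq_zero, ← norm_eq_zero, ← sq_eq_zero_iff (M₀ := ℝ), @norm_sub_sq ℂ, hinner,
    inner_self_eq_norm_sq, hS, hf]
  ring

theorem IsPureIsometry.eq_zero_of_adjoint_apply_eq_smul (hS : IsPureIsometry S) {c : ℂ}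
    (hc : 1 ≤ ‖c‖) {f : K} (hf : (S†) f = c • f) : f = 0 := by
  obtain ⟨hS, hpure⟩ := hS
  by_contra hf0
  have hc1 : ‖c‖ = 1 := by
    refine le_antisymm (le_of_mul_le_mul_right ?_ (norm_pos_iff.2 hf0)) hc
    calc ‖c‖ * ‖f‖ = ‖(S†) f‖ := by rw [hf, norm_smul]
      _ ≤ ‖S†‖ * ‖f‖ := le_opNorm _ _
      _ ≤ 1 * ‖f‖ := by
        gcongr
        rw [LinearIsometryEquiv.norm_map]
        exact norm_le_one_of_norm_map hS
  have hfix : ∀ g, (S†) g = c • g → S (c • g) = g := fun g hg => by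
    rw [← hg]
    exact apply_adjoint_apply_of_norm_adjoint_apply hS (by rw [hg, norm_smul, hc1, one_mul])
  have hmem : ∀ n g, (S†) g = c • g → g ∈ Set.range ⇑(S ^ (n + 1)) := by
    intro n
    induction n with
    | zero => exact fun g hg => ⟨c • g, by rw [zero_add, pow_one, hfix g hg]⟩
    | succ n ih =>
      intro g hg
      obtain ⟨y, hy⟩ := ih (c • g) (by rw [map_smul, hg])
      exact ⟨y, by rw [pow_succ', mul_apply_eq_comp, hy, hfix g hg]⟩
  have : f ∈ ⋂ n : ℕ, Set.range ⇑(S ^ (n + 1)) := Set.mem_iInter.2 fun n => hmem n f hf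
  rw [hpure] at this
  exact hf0 this

theorem finiteDimensional_quotient_range_sub_smul_one (hS : ∀ x, ‖S x‖ = ‖x‖)
    [FiniteDimensional ℂ (S†).ker] {a : ℂ} (ha : ‖a‖ < 1) :
    FiniteDimensional ℂ (K ⧸ (S - a • 1 : K →L[ℂ] K).range) := by
  obtain ⟨u, hu⟩ : IsUnit (1 - a • S†) := by
    refine isUnit_one_sub_of_norm_lt_one ((norm_smul_le _ _).trans_lt ?_)
    rw [LinearIsometryEquiv.norm_map]
    nlinarith [norm_le_one_of_norm_map hS, norm_nonneg a, norm_nonneg S]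
  refine Module.Finite.of_surjective ((S - a • 1 : K →L[ℂ] K).range.mkQ ∘ₗ
    (S†).ker.subtype) fun q => ?_
  obtain ⟨x, rfl⟩ := Submodule.Quotient.mk_surjective _ q
  -- with `z = (1 - a S†)⁻¹ x`, the vector `z - S S† z ∈ ker S†` differs from `x` by `-(S - a) S† z`
  set z := (↑u⁻¹ : K →L[ℂ] K) x
  have hx : x = z - a • (S†) z := by
    rw [show z - a • (S†) z = (↑u * ↑u⁻¹ : K →L[ℂ] K) x by simp [hu, z], Units.mul_inv,
      one_apply_eq_self]
  refine ⟨⟨z - S ((S†) z), ?_⟩, ?_⟩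
  · simp [adjoint_apply_apply_of_norm_map hS]
  · simp only [LinearMap.comp_apply, Submodule.subtype_apply, Submodule.mkQ_apply]
    rw [Submodule.Quotient.eq]
    exact ⟨-(S†) z, by simp [hx]; abel⟩

end Isometry

section Blaschke

def blaschkeNumerator (s : Multiset ℂ) : ℂ[X] :=
  (s.map fun a => Polynomial.X - Polynomial.C a).prod

def blaschkeDenominator (s : Multiset ℂ) : ℂ[X] :=
  (s.map fun a => 1 - Polynomial.C (starRingEnd ℂ a) * Polynomial.X).prod

theorem blaschkeNumerator_roots {p : ℂ[X]} (hp : p.Monic) : blaschkeNumerator p.roots = p :=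
  Polynomial.prod_multiset_X_sub_C_of_monic_of_roots_card_eq hp IsAlgClosed.card_roots_eq_natDegree

variable {K : Type*} [NormedAddCommGroup K] [InnerProductSpace ℂ K]

def blaschkeProduct (S : K →L[ℂ] K) (s : Multiset ℂ) : K →L[ℂ] K :=
  aeval S (blaschkeNumerator s) * Ring.inverse (aeval S (blaschkeDenominator s))

variable {S : K →L[ℂ] K} {s : Multiset ℂ}

theorem aeval_blaschkeNumerator_cons (a : ℂ) :
    aeval S (blaschkeNumerator (a ::ₘ s)) = (S - a • 1) * aeval S (blaschkeNumerator s) := by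
  simp [blaschkeNumerator, Algebra.algebraMap_eq_smul_one]

theorem aeval_blaschkeDenominator_cons (a : ℂ) :
    aeval S (blaschkeDenominator (a ::ₘ s)) =
      aeval S (blaschkeDenominator s) * (1 - starRingEnd ℂ a • S) := by
  rw [blaschkeDenominator, Multiset.map_cons, Multiset.prod_cons, mul_comm, map_mul,
    ← blaschkeDenominator]
  simp [Algebra.smul_def]

theorem norm_sub_smul_one_apply (hS : ∀ x, ‖S x‖ = ‖x‖) (a : ℂ) (y : K) :
    ‖(S - a • 1) y‖ = ‖(1 - starRingEnd ℂ a • S) y‖ := by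
  have hre : RCLike.re ⟪S y, a • y⟫_ℂ = RCLike.re ⟪y, starRingEnd ℂ a • S y⟫_ℂ := by
    rw [inner_smul_right, inner_smul_right, ← inner_conj_symm y, ← map_mul, RCLike.conj_re]
  simp only [sub_apply, smul_apply, one_apply_eq_self]
  rw [← sq_eq_sq₀ (norm_nonneg _) (norm_nonneg _), @norm_sub_sq ℂ, @norm_sub_sq ℂ, hre,
    norm_smul, norm_smul, RCLike.norm_conj, hS]

theorem norm_aeval_blaschkeNumerator_apply (hS : ∀ x, ‖S x‖ = ‖x‖) (y : K) :
    ‖aeval S (blaschkeNumerator s) y‖ = ‖aeval S (blaschkeDenominator s) y‖ := by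
  induction s using Multiset.induction_on generalizing y with
  | empty => simp [blaschkeNumerator, blaschkeDenominator]
  | cons a s ih =>
    have hcomm := ((Commute.one_left S).sub_left ((Commute.refl S).smul_left
      (starRingEnd ℂ a))).aeval_right (blaschkeNumerator s)
    rw [aeval_blaschkeNumerator_cons, aeval_blaschkeDenominator_cons, mul_apply_eq_comp,
      norm_sub_smul_one_apply hS, ← mul_apply_eq_comp, hcomm.eq, mul_apply_eq_comp, ih,
      mul_apply_eq_comp]

variable [CompleteSpace K]

theorem isUnit_aeval_blaschkeDenominator (hS : ‖S‖ ≤ 1) (hs : ∀ a ∈ s, ‖a‖ < 1) :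
    IsUnit (aeval S (blaschkeDenominator s)) := by
  induction s using Multiset.induction_on with
  | empty => simp [blaschkeDenominator]
  | cons a s ih =>
    rw [aeval_blaschkeDenominator_cons]
    refine (ih fun b hb => hs b (Multiset.mem_cons_of_mem hb)).mul
      (isUnit_one_sub_of_norm_lt_one ((norm_smul_le _ _).trans_lt ?_))
    rw [RCLike.norm_conj]
    nlinarith [hs a (Multiset.mem_cons_self a s), norm_nonneg a, norm_nonneg S]

theorem norm_blaschkeProduct_apply (hS : ∀ x, ‖S x‖ = ‖x‖) (hs : ∀ a ∈ s, ‖a‖ < 1) (x : K) :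
    ‖blaschkeProduct S s x‖ = ‖x‖ := by
  obtain ⟨u, hu⟩ := isUnit_aeval_blaschkeDenominator (norm_le_one_of_norm_map hS) hs
  rw [blaschkeProduct, ← hu, Ring.inverse_unit, mul_apply_eq_comp,
    norm_aeval_blaschkeNumerator_apply hS, ← hu, ← mul_apply_eq_comp, Units.mul_inv,
    one_apply_eq_self]

theorem range_blaschkeProduct (hS : ‖S‖ ≤ 1) (hs : ∀ a ∈ s, ‖a‖ < 1) :
    (blaschkeProduct S s).range = (aeval S (blaschkeNumerator s)).range := by
  obtain ⟨u, hu⟩ := isUnit_aeval_blaschkeDenominator hS hs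
  rw [blaschkeProduct, ← hu, Ring.inverse_unit, toLinearMap_mul, Module.End.mul_eq_comp]
  refine LinearMap.range_comp_of_range_eq_top _
    (LinearMap.range_eq_top.2 fun x => ⟨(u : K →L[ℂ] K) x, ?_⟩)
  rw [coe_coe, ← mul_apply_eq_comp, Units.inv_mul, one_apply_eq_self]

theorem Commute.blaschkeProduct_right {C : K →L[ℂ] K} (hC : Commute C S) (hS : ‖S‖ ≤ 1)
    (hs : ∀ a ∈ s, ‖a‖ < 1) : Commute C (blaschkeProduct S s) := by
  obtain ⟨u, hu⟩ := isUnit_aeval_blaschkeDenominator hS hs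
  rw [blaschkeProduct, ← hu, Ring.inverse_unit]
  exact (hC.aeval_right _).mul_right (Commute.units_inv_right (hu ▸ hC.aeval_right _))

theorem finiteDimensional_quotient_range_aeval_blaschkeNumerator (hS : ∀ x, ‖S x‖ = ‖x‖)
    [FiniteDimensional ℂ (S†).ker] (hs : ∀ a ∈ s, ‖a‖ < 1) :
    FiniteDimensional ℂ (K ⧸ (aeval S (blaschkeNumerator s)).range) := by
  induction s using Multiset.induction_on with
  | empty =>
    rw [blaschkeNumerator, Multiset.map_zero, Multiset.prod_zero, map_one,
      ContinuousLinearMap.one_def, coe_id, LinearMap.range_id]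
    infer_instance
  | cons a s ih =>
    have := ih fun b hb => hs b (Multiset.mem_cons_of_mem hb)
    have := finiteDimensional_quotient_range_sub_smul_one hS (hs a (Multiset.mem_cons_self a s))
    rw [aeval_blaschkeNumerator_cons, toLinearMap_mul, Module.End.mul_eq_comp]
    exact Module.Finite.quotient_range_comp

end Blaschke

section Compression

variable {K : Type*} [NormedAddCommGroup K] [InnerProductSpace ℂ K] [CompleteSpace K]
  {S : K →L[ℂ] K} {E : Submodule ℂ K}

theorem exists_adjoint_apply_eq_smul_of_hasEigenvalue_mapQ (hE : IsClosed (E : Set K))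
    [FiniteDimensional ℂ (K ⧸ E)] (hSE : E ≤ E.comap (S : K →ₗ[ℂ] K)) {a : ℂ}
    (ha : Module.End.HasEigenvalue (E.mapQ E (S : K →ₗ[ℂ] K) hSE) a) :
    ∃ f ≠ 0, (S†) f = starRingEnd ℂ a • f := by
  set Sa := E.mapQ E (S : K →ₗ[ℂ] K) hSE - a • 1
  have hrange : LinearMap.range Sa < ⊤ := by
    obtain ⟨v, hv⟩ := ha.exists_hasEigenvector
    rw [lt_top_iff_ne_top, Ne, LinearMap.range_eq_top, ← LinearMap.injective_iff_surjective]
    intro hinj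
    exact hv.2 (hinj (by simp [Sa, hv.apply_eq_smul]))
  obtain ⟨ψ, hψ0, hψ⟩ := (LinearMap.range Sa).exists_le_ker_of_lt_top hrange
  -- `ψ` kills `(S - a) K + E`; its pullback to `K`, represented via Riesz, is the eigenvector
  let φ : StrongDual ℂ K := (LinearMap.toContinuousLinearMap ψ).comp E.mkQL
  refine ⟨(InnerProductSpace.toDual ℂ K).symm φ, ?_, ?_⟩
  · rw [Ne, LinearIsometryEquiv.map_eq_zero_iff]
    intro hφ
    refine hψ0 (LinearMap.ext fun q => ?_)
    obtain ⟨x, rfl⟩ := Submodule.Quotient.mk_surjective E q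
    exact congr($hφ x)
  · have hf : (InnerProductSpace.toDual ℂ K).symm φ ∈ (S - a • 1 : K →L[ℂ] K).rangeᗮ := by
      rw [Submodule.mem_orthogonal']
      rintro _ ⟨y, rfl⟩
      rw [InnerProductSpace.toDual_symm_apply]
      exact hψ ⟨E.mkQ y, by simp [Sa]⟩
    rw [orthogonal_range, LinearMap.mem_ker] at hf
    simpa [sub_eq_zero, map_smulₛₗ, adjoint_one] using hf

theorem IsPureIsometry.norm_lt_one_of_mem_roots_minpoly_mapQ (hS : IsPureIsometry S)
    (hE : IsClosed (E : Set K)) [FiniteDimensional ℂ (K ⧸ E)]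
    (hSE : E ≤ E.comap (S : K →ₗ[ℂ] K)) {a : ℂ}
    (ha : a ∈ (minpoly ℂ (E.mapQ E (S : K →ₗ[ℂ] K) hSE)).roots) : ‖a‖ < 1 := by
  obtain ⟨f, hf0, hf⟩ := exists_adjoint_apply_eq_smul_of_hasEigenvalue_mapQ hE hSE
    (Module.End.hasEigenvalue_of_isRoot (Polynomial.isRoot_of_mem_roots ha))
  by_contra! h
  exact hf0 (hS.eq_zero_of_adjoint_apply_eq_smul (by rwa [RCLike.norm_conj]) hf)

theorem IsPureIsometry.exists_isometry_range_le (hS : IsPureIsometry S)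
    [FiniteDimensional ℂ (S†).ker] (hE : IsClosed (E : Set K)) [FiniteDimensional ℂ (K ⧸ E)]
    (hSE : E ≤ E.comap (S : K →ₗ[ℂ] K)) :
    ∃ J : K →L[ℂ] K, (∀ x, ‖J x‖ = ‖x‖) ∧ (∀ C, Commute C S → Commute C J) ∧
      (∀ x, J x ∈ E) ∧ FiniteDimensional ℂ (K ⧸ J.range) := by
  set Sbar := E.mapQ E (S : K →ₗ[ℂ] K) hSE
  set s := (minpoly ℂ Sbar).roots
  have hs : ∀ a ∈ s, ‖a‖ < 1 := fun a ha => hS.norm_lt_one_of_mem_roots_minpoly_mapQ hE hSE ha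
  have hS1 := norm_le_one_of_norm_map hS.1
  refine ⟨blaschkeProduct S s, norm_blaschkeProduct_apply hS.1 hs,
    fun C hC => hC.blaschkeProduct_right hS1 hs, fun x => ?_, ?_⟩
  · obtain ⟨y, hy⟩ : blaschkeProduct S s x ∈ (aeval S (blaschkeNumerator s)).range :=
      range_blaschkeProduct hS1 hs ▸ LinearMap.mem_range_self _ x
    rw [← hy, ← Submodule.Quotient.mk_eq_zero, ← E.mkQ_apply, toLinearMap_aeval,
      E.mkQ_aeval hSE,
      blaschkeNumerator_roots (minpoly.monic (Algebra.IsIntegral.isIntegral Sbar)),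
      minpoly.aeval, LinearMap.zero_apply]
  · rw [range_blaschkeProduct hS1 hs]
    exact finiteDimensional_quotient_range_aeval_blaschkeNumerator hS.1 hs

end Compression

theorem exists_restrict_unitarilyEquivPairs_of_isometry {K : Type*} [NormedAddCommGroup K]
    [InnerProductSpace ℂ K] [CompleteSpace K] {S T J : K →L[ℂ] K} {E : Submodule ℂ K}
    (hSE : ∀ x ∈ E, S x ∈ E) (hTE : ∀ x ∈ E, T x ∈ E) (hJ : ∀ x, ‖J x‖ = ‖x‖)
    (hSJ : Commute S J) (hTJ : Commute T J) (hJE : ∀ x, J x ∈ E)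
    (hcodim : FiniteDimensional ℂ (K ⧸ J.range)) :
    ∃ (L : Submodule ℂ ↥E) (_ : IsClosed (L : Set ↥E))
      (hSL : ∀ x ∈ L, clmRestrict S E hSE x ∈ L)
      (hTL : ∀ x ∈ L, clmRestrict T E hTE x ∈ L),
      FiniteDimensional ℂ (↥E ⧸ L) ∧
      UnitarilyEquivPairs S T
        (clmRestrict (clmRestrict S E hSE) L hSL)
        (clmRestrict (clmRestrict T E hTE) L hTL) := by
  let V : K →ₗᵢ[ℂ] E := ⟨(J : K →ₗ[ℂ] K).codRestrict E hJE, hJ⟩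
  have hV : ∀ {C : K →L[ℂ] K} (hCE : ∀ x ∈ E, C x ∈ E), Commute C J →
      ∀ y, V (C y) = clmRestrict C E hCE (V y) :=
    fun _ hC y => Subtype.ext congr($(hC.eq) y).symm
  have hVL : ∀ {C : K →L[ℂ] K} (hCE : ∀ x ∈ E, C x ∈ E), Commute C J →
      ∀ x ∈ V.range, clmRestrict C E hCE x ∈ V.range := by
    rintro C hCE hC _ ⟨y, rfl⟩
    exact ⟨C y, hV hCE hC y⟩
  refine ⟨V.range, ?_, hVL hSE hSJ, hVL hTE hTJ, ?_, ?_⟩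
  · exact V.isometry.isClosedEmbedding.isClosed_range
  · have hle : V.range ≤ J.range.comap E.subtype := by
      rintro _ ⟨y, rfl⟩
      exact ⟨y, rfl⟩
    refine Module.Finite.of_injective (V.range.mapQ J.range E.subtype hle) fun p q hpq => ?_
    obtain ⟨x, rfl⟩ := Submodule.Quotient.mk_surjective _ p
    obtain ⟨x', rfl⟩ := Submodule.Quotient.mk_surjective _ q
    simp only [Submodule.mapQ_apply, Submodule.Quotient.eq] at hpq ⊢
    obtain ⟨y, hy⟩ := hpq
    exact ⟨y, Subtype.ext (by simpa [V] using hy)⟩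
  · let U : K ≃ₗᵢ[ℂ] V.range :=
      ⟨LinearEquiv.ofInjective V.toLinearMap V.injective, fun x => V.norm_map x⟩
    exact ⟨U, fun x => Subtype.ext (hV hSE hSJ x), fun x => Subtype.ext (hV hTE hTJ x)⟩

theorem statement12_general {K : Type*} [NormedAddCommGroup K] [InnerProductSpace ℂ K]
    [CompleteSpace K] (p : CPoly2)
    (S T : K →L[ℂ] K) (hV : IsPureIsopair p S T) (hfin : FiniteBimult S T)
    (E : Submodule ℂ K) (hEc : IsClosed (E : Set K))
    (hSE : ∀ x ∈ E, S x ∈ E) (hTE : ∀ x ∈ E, T x ∈ E)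
    (hcodim : FiniteDimensional ℂ (K ⧸ E)) :
    ∃ (L : Submodule ℂ ↥E) (_ : IsClosed (L : Set ↥E))
      (hSL : ∀ x ∈ L, clmRestrict S E hSE x ∈ L)
      (hTL : ∀ x ∈ L, clmRestrict T E hTE x ∈ L),
      FiniteDimensional ℂ (↥E ⧸ L) ∧
      UnitarilyEquivPairs S T
        (clmRestrict (clmRestrict S E hSE) L hSL)
        (clmRestrict (clmRestrict T E hTE) L hTL) := by
  obtain ⟨hST, hSpure, -, -⟩ := hV
  have : FiniteDimensional ℂ (S†).ker := Module.rank_lt_aleph0_iff.1 hfin.1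
  obtain ⟨J, hJ, hJS, hJE, hJcodim⟩ := hSpure.exists_isometry_range_le hEc hSE
  exact exists_restrict_unitarilyEquivPairs_of_isometry hSE hTE hJ (hJS S (Commute.refl S))
    (hJS T hST.symm) hJE hJcodim

/-- if `W = V|_H` for a closed invariant finite codimension subspace `H`,
then `V` is unitarily equivalent to `W` restricted to a closed invariant finite
codimension subspace of `H`. -/
theorem statement12 {K : Type*} [NormedAddCommGroup K] [InnerProductSpace ℂ K]
    [CompleteSpace K] (p : CPoly2) (hsf : SqFree p) (hit : InnerToral p)
    (S T : K →L[ℂ] K) (hV : IsPureIsopair p S T) (hfin : FiniteBimult S T)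
    (E : Submodule ℂ K) (hEc : IsClosed (E : Set K))
    (hSE : ∀ x ∈ E, S x ∈ E) (hTE : ∀ x ∈ E, T x ∈ E)
    (hcodim : FiniteDimensional ℂ (K ⧸ E)) :
    ∃ (L : Submodule ℂ ↥E) (_ : IsClosed (L : Set ↥E))
      (hSL : ∀ x ∈ L, clmRestrict S E hSE x ∈ L)
      (hTL : ∀ x ∈ L, clmRestrict T E hTE x ∈ L),
      FiniteDimensional ℂ (↥E ⧸ L) ∧
      UnitarilyEquivPairs S T
        (clmRestrict (clmRestrict S E hSE) L hSL)
        (clmRestrict (clmRestrict T E hTE) L hTL) :=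
  statement12_general p S T hV hfin E hEc hSE hTE hcodim
end
end

section
/- Let p ∈ ℂ[z,w] be square free and inner toral. Suppose V = (S,T) is a pure p-isopair of finite bimultiplicity acting on a Hilbert space K. If there exists a closed V-invariant subspace H of K of finite codimension such that the restriction of V to H is β-cyclic, then there exist a β-cyclic pure p-isopair W acting on a Hilbert space L and a closed W-invariant subspace F of L of finite codimension such that the restriction of W to F is unitarily equivalent to V. -/
noncomputable section

universe u

open MvPolynomial

/-!
The restriction `W = V|E` is a pure `p`-isopair, `β`-cyclic by hypothesis, so it suffices to find
a closed `W`-invariant subspace `F ⊆ E` of finite codimension with `W|F` unitarily equivalent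
to `V`. The finite-dimensional space `Eᗮ` is `S†`-invariant, and the eigenvalues of `S†` lie in
the open unit disc because `S` is pure. Let `χ` be the minimal polynomial of `S†` on `Eᗮ` and
`Φ = ∏ (S - c̄)(1 - c S)⁻¹` the Blaschke product over its roots `c`. Then `Φ` is an isometry
commuting with `S` and `T`, its range has finite codimension because `S` has finite
multiplicity, and `Φ† = R χ(S†)` kills `Eᗮ`, so `ran Φ ⊆ E`. Hence `F = ran Φ` works, with `Φ`
as the unitary from `K` onto `F`.
-/

open ContinuousLinearMap
open scoped Ring

theorem Commute.ringInverse_right {M₀ : Type*} [MonoidWithZero M₀] {a b : M₀}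
    (h : Commute a b) : Commute a b⁻¹ʳ := by
  by_cases hb : IsUnit b
  · obtain ⟨u, rfl⟩ := hb
    rw [Ring.inverse_unit]
    exact h.units_inv_right
  · rw [Ring.inverse_non_unit _ hb]
    exact Commute.zero_right a

theorem finiteDimensional_quotient_comap_subtype {k V : Type*} [Field k] [AddCommGroup V]
    [Module k V] (E N : Submodule k V) [FiniteDimensional k (V ⧸ N)] :
    FiniteDimensional k (E ⧸ N.comap E.subtype) := by
  refine FiniteDimensional.of_injective ((N.comap E.subtype).mapQ N E.subtype le_rfl) ?_
  rw [← LinearMap.ker_eq_bot, Submodule.ker_mapQ, Submodule.mkQ_map_self]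

section Restrict

variable {H : Type*} [NormedAddCommGroup H] [NormedSpace ℂ H] {E : Submodule ℂ H}

@[simp] theorem coe_clmRestrict_apply (S : H →L[ℂ] H) (hS : ∀ x ∈ E, S x ∈ E) (x : E) :
    (clmRestrict S E hS x : H) = S x := rfl

@[simp] theorem coe_clmRestrict_pow_apply (S : H →L[ℂ] H) (hS : ∀ x ∈ E, S x ∈ E) (n : ℕ)
    (x : E) : ((clmRestrict S E hS ^ n) x : H) = (S ^ n) x := by
  induction n with
  | zero => rfl
  | succ n ih => rw [pow_succ', pow_succ', mul_apply_eq_comp, mul_apply_eq_comp,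
      coe_clmRestrict_apply, ih]

theorem coe_polyOp_clmRestrict_apply (q : CPoly2) {S T : H →L[ℂ] H} (hS : ∀ x ∈ E, S x ∈ E)
    (hT : ∀ x ∈ E, T x ∈ E) (x : E) :
    (polyOp q (clmRestrict S E hS) (clmRestrict T E hT) x : H) = polyOp q S T x := by
  simp only [polyOp, sum_apply, smul_apply, Submodule.coe_sum, Submodule.coe_smul,
    mul_apply_eq_comp, coe_clmRestrict_pow_apply]

theorem IsPureIsometry.clmRestrict {S : H →L[ℂ] H} (h : IsPureIsometry S)
    (hS : ∀ x ∈ E, S x ∈ E) : IsPureIsometry (clmRestrict S E hS) := by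
  refine ⟨fun x => h.1 x, Set.eq_singleton_iff_unique_mem.mpr ⟨?_, fun y hy => ?_⟩⟩
  · exact Set.mem_iInter.mpr fun n => ⟨0, map_zero _⟩
  · have hmem : (y : H) ∈ ⋂ n : ℕ, Set.range (S ^ (n + 1)) := Set.mem_iInter.mpr fun n => by
      obtain ⟨z, hz⟩ := Set.mem_iInter.mp hy n
      exact ⟨z, by rw [← hz, coe_clmRestrict_pow_apply]⟩
    rw [h.2] at hmem
    exact Subtype.ext hmem

theorem IsPureIsopair.clmRestrict {p : CPoly2} {S T : H →L[ℂ] H} (h : IsPureIsopair p S T)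
    (hS : ∀ x ∈ E, S x ∈ E) (hT : ∀ x ∈ E, T x ∈ E) :
    IsPureIsopair p (clmRestrict S E hS) (clmRestrict T E hT) := by
  obtain ⟨hST, hSp, hTp, hp⟩ := h
  refine ⟨?_, hSp.clmRestrict hS, hTp.clmRestrict hT, ?_⟩
  · ext x
    simp only [mul_apply_eq_comp, coe_clmRestrict_apply, ← mul_apply_eq_comp S, hST.eq]
  · ext x
    simp [coe_polyOp_clmRestrict_apply, hp]

end Restrict

section Intertwining

variable {K L : Type*} [NormedAddCommGroup K] [NormedSpace ℂ K] [NormedAddCommGroup L]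
  [NormedSpace ℂ L] {S T : K →L[ℂ] K} {S' T' : L →L[ℂ] L}

theorem apply_mem_range_of_intertwining (J : K →ₗᵢ[ℂ] L) (h : ∀ x, J (S x) = S' (J x)) :
    ∀ y ∈ LinearMap.range J.toLinearMap, S' y ∈ LinearMap.range J.toLinearMap := by
  rintro _ ⟨x, rfl⟩
  exact ⟨S x, h x⟩

theorem equivRange_symm_clmRestrict_apply (J : K →ₗᵢ[ℂ] L) (h : ∀ x, J (S x) = S' (J x))
    (h' : ∀ y ∈ LinearMap.range J.toLinearMap, S' y ∈ LinearMap.range J.toLinearMap)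
    (y : LinearMap.range J.toLinearMap) :
    J.equivRange.symm (clmRestrict S' _ h' y) = S (J.equivRange.symm y) := by
  obtain ⟨x, rfl⟩ := J.equivRange.surjective y
  rw [LinearIsometryEquiv.symm_apply_apply, LinearIsometryEquiv.symm_apply_eq]
  exact Subtype.ext (by simp [h])

theorem unitarilyEquivPairs_clmRestrict_range (J : K →ₗᵢ[ℂ] L)
    (hS : ∀ x, J (S x) = S' (J x)) (hT : ∀ x, J (T x) = T' (J x))
    (hS' : ∀ y ∈ LinearMap.range J.toLinearMap, S' y ∈ LinearMap.range J.toLinearMap)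
    (hT' : ∀ y ∈ LinearMap.range J.toLinearMap, T' y ∈ LinearMap.range J.toLinearMap) :
    UnitarilyEquivPairs (clmRestrict S' _ hS') (clmRestrict T' _ hT') S T :=
  ⟨J.equivRange.symm, equivRange_symm_clmRestrict_apply J hS hS',
    equivRange_symm_clmRestrict_apply J hT hT'⟩

end Intertwining

section Hilbert

variable {K : Type*} [NormedAddCommGroup K] [InnerProductSpace ℂ K] {S : K →L[ℂ] K}

theorem coe_aeval_restrict_apply (A : K →L[ℂ] K) {M : Submodule ℂ K} (hM : ∀ x ∈ M, A x ∈ M)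
    (f : Polynomial ℂ) (x : M) :
    (Polynomial.aeval ((A : K →ₗ[ℂ] K).restrict hM) f x : K) = Polynomial.aeval A f x := by
  induction f using Polynomial.induction_on' with
  | add p q hp hq => simp [hp, hq]
  | monomial n a =>
    rw [Polynomial.aeval_monomial, Polynomial.aeval_monomial, Module.End.pow_restrict]
    simp [Algebra.algebraMap_eq_smul_one, LinearMap.restrict_apply, Module.End.pow_apply]

theorem norm_sub_conj_smul_eq_norm_sub_smul (hS : ∀ x, ‖S x‖ = ‖x‖) (c : ℂ) (x : K) :
    ‖S x - (starRingEnd ℂ c) • x‖ = ‖x - c • S x‖ := by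
  have hre : RCLike.re (inner ℂ (S x) ((starRingEnd ℂ c) • x))
      = RCLike.re (inner ℂ x (c • S x)) := by
    rw [inner_smul_right, inner_smul_right, ← RCLike.conj_re (_ * _), map_mul,
      Complex.conj_conj, inner_conj_symm]
  refine (sq_eq_sq₀ (norm_nonneg _) (norm_nonneg _)).mp ?_
  rw [@norm_sub_sq ℂ, @norm_sub_sq ℂ, hre, norm_smul, norm_smul, RCLike.norm_conj, hS]

/-- The operator `b_c(S)` of the Blaschke factor `b_c(z) = (z - c̄) / (1 - c z)`; its zero is
placed at `c̄` so that its adjoint contains the factor `S† - c`. -/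
def blaschkeFactor (S : K →L[ℂ] K) (c : ℂ) : K →L[ℂ] K :=
  (S - (starRingEnd ℂ c) • 1) * (1 - c • S)⁻¹ʳ

def blaschke (S : K →L[ℂ] K) (l : List ℂ) : K →L[ℂ] K :=
  (l.map (blaschkeFactor S)).prod

@[simp] theorem blaschke_nil : blaschke S [] = 1 := rfl

@[simp] theorem blaschke_cons (c : ℂ) (l : List ℂ) :
    blaschke S (c :: l) = blaschkeFactor S c * blaschke S l := rfl

theorem Commute.blaschkeFactor_right {B : K →L[ℂ] K} (h : Commute B S) (c : ℂ) :
    Commute B (blaschkeFactor S c) :=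
  (h.sub_right ((Commute.one_right B).smul_right _)).mul_right
    ((Commute.one_right B).sub_right (h.smul_right c)).ringInverse_right

theorem Commute.blaschke_right {B : K →L[ℂ] K} (h : Commute B S) (l : List ℂ) :
    Commute B (blaschke S l) :=
  Commute.list_prod_right _ _ fun _ hy => by
    obtain ⟨c, -, rfl⟩ := List.mem_map.mp hy
    exact h.blaschkeFactor_right c

variable [CompleteSpace K]

theorem isUnit_one_sub_smul (hS : ∀ x, ‖S x‖ = ‖x‖) {c : ℂ} (hc : ‖c‖ < 1) :
    IsUnit (1 - c • S) :=
  isUnit_one_sub_of_norm_lt_one <| calc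
    ‖c • S‖ ≤ ‖c‖ * ‖S‖ := norm_smul_le c S
    _ ≤ ‖c‖ * 1 := by gcongr; exact S.opNorm_le_bound zero_le_one fun x => by rw [hS, one_mul]
    _ < 1 := by rwa [mul_one]

theorem norm_blaschkeFactor_apply (hS : ∀ x, ‖S x‖ = ‖x‖) {c : ℂ} (hc : ‖c‖ < 1) (x : K) :
    ‖blaschkeFactor S c x‖ = ‖x‖ := by
  have hinv : (1 - c • S) ((1 - c • S)⁻¹ʳ x) = x := by
    rw [← mul_apply_eq_comp, Ring.mul_inverse_cancel _ (isUnit_one_sub_smul hS hc),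
      one_apply_eq_self]
  conv_rhs => rw [← hinv]
  simpa [blaschkeFactor] using norm_sub_conj_smul_eq_norm_sub_smul hS c ((1 - c • S)⁻¹ʳ x)

theorem norm_blaschke_apply (hS : ∀ x, ‖S x‖ = ‖x‖) {l : List ℂ} (hl : ∀ c ∈ l, ‖c‖ < 1)
    (x : K) : ‖blaschke S l x‖ = ‖x‖ := by
  induction l generalizing x with
  | nil => rfl
  | cons c l ih =>
    rw [blaschke_cons, mul_apply_eq_comp, norm_blaschkeFactor_apply hS (hl c List.mem_cons_self),
      ih (fun d hd => hl d (List.mem_cons_of_mem c hd))]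

theorem star_blaschkeFactor (c : ℂ) :
    star (blaschkeFactor S c) = (1 - (starRingEnd ℂ c) • star S)⁻¹ʳ * (star S - c • 1) := by
  simp [blaschkeFactor, star_mul, ← Ring.inverse_star, star_sub, star_smul]

theorem star_blaschke (l : List ℂ) : ∃ R : K →L[ℂ] K,
    star (blaschke S l) = R * Polynomial.aeval (star S)
      (l.map fun c => Polynomial.X - Polynomial.C c).prod := by
  induction l with
  | nil => exact ⟨1, by simp⟩
  | cons c l ih =>
    obtain ⟨R, hR⟩ := ih
    set U := (1 - (starRingEnd ℂ c) • star S)⁻¹ʳ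
    refine ⟨R * U, ?_⟩
    rw [blaschke_cons, star_mul, hR, star_blaschkeFactor, List.map_cons, List.prod_cons,
      mul_comm (Polynomial.X - Polynomial.C c), map_mul]
    set P := Polynomial.aeval (star S) (l.map fun c => Polynomial.X - Polynomial.C c).prod
    have hPS : Commute P (star S) := by
      simpa using (Commute.all (_ : Polynomial ℂ) Polynomial.X).map (Polynomial.aeval (star S))
    have hPU : Commute P U :=
      ((Commute.one_right P).sub_right (hPS.smul_right _)).ringInverse_right
    simp only [mul_assoc]
    rw [← mul_assoc P, hPU.eq]
    simp [Algebra.algebraMap_eq_smul_one, mul_assoc]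

theorem finiteDimensional_ker_adjoint_sub_smul (hS : ∀ x, ‖S x‖ = ‖x‖) {c : ℂ} (hc : ‖c‖ < 1)
    [FiniteDimensional ℂ (LinearMap.ker (adjoint S : K →ₗ[ℂ] K))] :
    FiniteDimensional ℂ (LinearMap.ker ((adjoint S - c • 1 : K →L[ℂ] K) : K →ₗ[ℂ] K)) := by
  have hmaps : ∀ x ∈ LinearMap.ker ((adjoint S - c • 1 : K →L[ℂ] K) : K →ₗ[ℂ] K),
      (1 - c • S) x ∈ LinearMap.ker (adjoint S : K →ₗ[ℂ] K) := by
    intro x hx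
    have hSS : adjoint S * S = 1 := (S.norm_map_iff_adjoint_comp_self).mp hS
    have : adjoint S * (1 - c • S) = adjoint S - c • 1 := by
      rw [mul_sub, mul_one, mul_smul_comm, hSS]
    rw [LinearMap.mem_ker, coe_coe] at hx ⊢
    rwa [← mul_apply_eq_comp, this]
  refine FiniteDimensional.of_injective (((1 - c • S : K →L[ℂ] K) : K →ₗ[ℂ] K).restrict hmaps) ?_
  intro x y hxy
  exact Subtype.ext <| (isUnit_iff_bijective.mp (isUnit_one_sub_smul hS hc)).1
    (congrArg Subtype.val hxy)

theorem ker_mul_eq_of_isUnit_left {U B : K →L[ℂ] K} (hU : IsUnit U) :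
    LinearMap.ker ((U * B : K →L[ℂ] K) : K →ₗ[ℂ] K) = LinearMap.ker (B : K →ₗ[ℂ] K) := by
  rw [toLinearMap_mul]
  exact LinearMap.ker_comp_of_ker_eq_bot _
    (LinearMap.ker_eq_bot.mpr (isUnit_iff_bijective.mp hU).1)

theorem ker_adjoint_blaschkeFactor (hS : ∀ x, ‖S x‖ = ‖x‖) {c : ℂ} (hc : ‖c‖ < 1) :
    LinearMap.ker (adjoint (blaschkeFactor S c) : K →ₗ[ℂ] K)
      = LinearMap.ker ((adjoint S - c • 1 : K →L[ℂ] K) : K →ₗ[ℂ] K) := by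
  have hU : IsUnit (1 - (starRingEnd ℂ c) • star S)⁻¹ʳ := by
    refine IsUnit.ringInverse ?_
    simpa [star_sub, star_smul] using (isUnit_one_sub_smul hS hc).star
  rw [← star_eq_adjoint, star_blaschkeFactor, ker_mul_eq_of_isUnit_left hU, star_eq_adjoint]

theorem isClosed_range_of_norm_map {B : K →L[ℂ] K} (hB : ∀ x, ‖B x‖ = ‖x‖) :
    IsClosed (LinearMap.range (B : K →ₗ[ℂ] K) : Set K) :=
  (AddMonoidHomClass.isometry_of_norm B hB).isClosedEmbedding.isClosed_range

theorem finiteDimensional_quotient_range_of_isClosed {B : K →L[ℂ] K}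
    (hB : IsClosed (LinearMap.range (B : K →ₗ[ℂ] K) : Set K))
    [FiniteDimensional ℂ (LinearMap.ker (adjoint B : K →ₗ[ℂ] K))] :
    FiniteDimensional ℂ (K ⧸ LinearMap.range (B : K →ₗ[ℂ] K)) := by
  have : CompleteSpace (LinearMap.range (B : K →ₗ[ℂ] K)) := hB.completeSpace_coe
  have e := Submodule.quotientEquivOfIsCompl _ _
    (Submodule.isCompl_orthogonal (K := LinearMap.range (B : K →ₗ[ℂ] K)))
  rw [orthogonal_range] at e
  exact Module.Finite.equiv e.symm

theorem finiteDimensional_quotient_range_blaschkeFactor (hS : ∀ x, ‖S x‖ = ‖x‖) {c : ℂ}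
    (hc : ‖c‖ < 1) [FiniteDimensional ℂ (LinearMap.ker (adjoint S : K →ₗ[ℂ] K))] :
    FiniteDimensional ℂ (K ⧸ LinearMap.range (blaschkeFactor S c : K →ₗ[ℂ] K)) := by
  have := finiteDimensional_ker_adjoint_sub_smul hS hc
  rw [← ker_adjoint_blaschkeFactor hS hc] at this
  exact finiteDimensional_quotient_range_of_isClosed
    (isClosed_range_of_norm_map (norm_blaschkeFactor_apply hS hc))

theorem finiteDimensional_quotient_range_blaschke (hS : ∀ x, ‖S x‖ = ‖x‖) {l : List ℂ}
    (hl : ∀ c ∈ l, ‖c‖ < 1) [FiniteDimensional ℂ (LinearMap.ker (adjoint S : K →ₗ[ℂ] K))] :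
    FiniteDimensional ℂ (K ⧸ LinearMap.range (blaschke S l : K →ₗ[ℂ] K)) := by
  induction l with
  | nil =>
    rw [blaschke_nil, toLinearMap_one, Module.End.one_eq_id, LinearMap.range_id]
    infer_instance
  | cons c l ih =>
    have := finiteDimensional_quotient_range_blaschkeFactor hS (hl c List.mem_cons_self)
    have := ih fun d hd => hl d (List.mem_cons_of_mem c hd)
    rw [blaschke_cons, toLinearMap_mul, Module.End.mul_eq_comp, LinearMap.range_comp]
    infer_instance

theorem norm_sub_conj_smul_sq_of_adjoint_apply_eq_smul (hS : ∀ x, ‖S x‖ = ‖x‖) {c : ℂ} {v : K}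
    (hv : adjoint S v = c • v) :
    ‖S v - starRingEnd ℂ c • v‖ ^ 2 = (1 - ‖c‖ ^ 2) * ‖v‖ ^ 2 := by
  have hre : RCLike.re (inner ℂ (S v) ((starRingEnd ℂ c) • v)) = ‖c‖ ^ 2 * ‖v‖ ^ 2 := by
    rw [inner_smul_right, ← adjoint_inner_right, hv, inner_smul_right, inner_self_eq_norm_sq_to_K,
      ← mul_assoc, RCLike.conj_mul]
    norm_cast
  rw [@norm_sub_sq ℂ, hre, norm_smul, RCLike.norm_conj, hS]
  ring

theorem norm_lt_one_of_adjoint_apply_eq_smul (hS : IsPureIsometry S) {c : ℂ} {v : K}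
    (hv : v ≠ 0) (he : adjoint S v = c • v) : ‖c‖ < 1 := by
  have hsq := norm_sub_conj_smul_sq_of_adjoint_apply_eq_smul hS.1 he
  have hv2 : 0 < ‖v‖ ^ 2 := by positivity
  have hle : ‖c‖ ≤ 1 := by
    by_contra! h
    have : (1 - ‖c‖ ^ 2) * ‖v‖ ^ 2 < 0 := mul_neg_of_neg_of_pos (by nlinarith) hv2
    linarith [sq_nonneg ‖S v - starRingEnd ℂ c • v‖]
  refine hle.lt_of_ne fun h1 => hv ?_
  have hSv : S v = starRingEnd ℂ c • v := by
    rw [h1] at hsq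
    simpa [sub_eq_zero] using hsq
  have hcc : c * starRingEnd ℂ c = 1 := by
    rw [RCLike.mul_conj, h1]
    norm_num
  have hpow : ∀ n : ℕ, (S ^ n) v = starRingEnd ℂ c ^ n • v := by
    intro n
    induction n with
    | zero => simp
    | succ n ih => rw [pow_succ', mul_apply_eq_comp, ih, map_smul, hSv, smul_smul, pow_succ]
  have hmem : v ∈ ⋂ n : ℕ, Set.range (S ^ (n + 1)) := Set.mem_iInter.mpr fun n =>
    ⟨c ^ (n + 1) • v, by rw [map_smul, hpow, smul_smul, ← mul_pow, hcc, one_pow, one_smul]⟩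
  rwa [hS.2] at hmem

theorem finiteDimensional_orthogonal_of_quotient {E : Submodule ℂ K} (hEc : IsClosed (E : Set K))
    [FiniteDimensional ℂ (K ⧸ E)] : FiniteDimensional ℂ Eᗮ := by
  have : CompleteSpace E := hEc.completeSpace_coe
  exact Module.Finite.equiv (Submodule.quotientEquivOfIsCompl _ _ E.isCompl_orthogonal)

theorem adjoint_apply_mem_orthogonal {E : Submodule ℂ K} (hSE : ∀ x ∈ E, S x ∈ E) :
    ∀ x ∈ Eᗮ, adjoint S x ∈ Eᗮ :=
  orthogonal_mem_invtSubmodule (T := adjoint S) (by rw [adjoint_adjoint]; exact hSE)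

theorem exists_blaschke_range_le (hS : IsPureIsometry S) {E : Submodule ℂ K}
    (hEc : IsClosed (E : Set K)) (hSE : ∀ x ∈ E, S x ∈ E) [FiniteDimensional ℂ (K ⧸ E)] :
    ∃ l : List ℂ, (∀ c ∈ l, ‖c‖ < 1) ∧ LinearMap.range (blaschke S l : K →ₗ[ℂ] K) ≤ E := by
  have := finiteDimensional_orthogonal_of_quotient hEc
  set D := (adjoint S : K →ₗ[ℂ] K).restrict (adjoint_apply_mem_orthogonal hSE)
  set χ := minpoly ℂ D
  have hχ : (χ.roots.toList.map fun c => Polynomial.X - Polynomial.C c).prod = χ := by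
    rw [← Multiset.prod_coe, ← Multiset.map_coe, Multiset.coe_toList]
    exact ((IsAlgClosed.splits χ).eq_prod_roots_of_monic
      (minpoly.monic (Algebra.IsIntegral.isIntegral D))).symm
  refine ⟨χ.roots.toList, fun c hc => ?_, ?_⟩
  · obtain ⟨v, hv⟩ := (Module.End.hasEigenvalue_of_isRoot
      (Polynomial.isRoot_of_mem_roots (Multiset.mem_toList.mp hc))).exists_hasEigenvector
    exact norm_lt_one_of_adjoint_apply_eq_smul hS (v := v) (fun h0 => hv.2 (Subtype.ext h0))
      (congrArg Subtype.val hv.apply_eq_smul)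
  · obtain ⟨R, hR⟩ := star_blaschke (S := S) χ.roots.toList
    have hker : Eᗮ ≤ LinearMap.ker (adjoint (blaschke S χ.roots.toList) : K →ₗ[ℂ] K) := by
      intro u hu
      rw [LinearMap.mem_ker, coe_coe, ← star_eq_adjoint, hR, hχ, mul_apply_eq_comp,
        star_eq_adjoint, ← coe_aeval_restrict_apply _ (adjoint_apply_mem_orthogonal hSE) _ ⟨u, hu⟩,
        minpoly.aeval]
      simp
    have : CompleteSpace E := hEc.completeSpace_coe
    rw [← orthogonal_range] at hker
    calc LinearMap.range (blaschke S χ.roots.toList : K →ₗ[ℂ] K)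
        ≤ (LinearMap.range (blaschke S χ.roots.toList : K →ₗ[ℂ] K))ᗮᗮ :=
          Submodule.le_orthogonal_orthogonal _
      _ ≤ Eᗮᗮ := Submodule.orthogonal_le hker
      _ = E := E.orthogonal_orthogonal

theorem exists_restrict_unitarilyEquivPairs {T Φ : K →L[ℂ] K} (hΦ : ∀ x, ‖Φ x‖ = ‖x‖)
    (hΦS : Commute S Φ) (hΦT : Commute T Φ) {E : Submodule ℂ K}
    (hΦE : LinearMap.range (Φ : K →ₗ[ℂ] K) ≤ E)
    [FiniteDimensional ℂ (K ⧸ LinearMap.range (Φ : K →ₗ[ℂ] K))]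
    (hSE : ∀ x ∈ E, S x ∈ E) (hTE : ∀ x ∈ E, T x ∈ E) :
    ∃ (F : Submodule ℂ E) (_ : IsClosed (F : Set E))
      (hSF : ∀ x ∈ F, clmRestrict S E hSE x ∈ F) (hTF : ∀ x ∈ F, clmRestrict T E hTE x ∈ F),
      FiniteDimensional ℂ (E ⧸ F) ∧
      UnitarilyEquivPairs (clmRestrict (clmRestrict S E hSE) F hSF)
        (clmRestrict (clmRestrict T E hTE) F hTF) S T := by
  let J : K →ₗᵢ[ℂ] E :=
    { toLinearMap := (Φ : K →ₗ[ℂ] K).codRestrict E fun x => hΦE ⟨x, rfl⟩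
      norm_map' := hΦ }
  have hJ : ∀ x, (J x : K) = Φ x := fun _ => rfl
  have hS : ∀ x, J (S x) = clmRestrict S E hSE (J x) := fun x => Subtype.ext <| by
    rw [hJ, coe_clmRestrict_apply, hJ, ← mul_apply_eq_comp, ← hΦS.eq, mul_apply_eq_comp]
  have hT : ∀ x, J (T x) = clmRestrict T E hTE (J x) := fun x => Subtype.ext <| by
    rw [hJ, coe_clmRestrict_apply, hJ, ← mul_apply_eq_comp, ← hΦT.eq, mul_apply_eq_comp]
  refine ⟨LinearMap.range J.toLinearMap, ?_, apply_mem_range_of_intertwining J hS,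
    apply_mem_range_of_intertwining J hT, ?_, unitarilyEquivPairs_clmRestrict_range J hS hT _ _⟩
  · rw [LinearMap.coe_range]
    exact J.isometry.isClosedEmbedding.isClosed_range
  · rw [LinearMap.range_codRestrict]
    exact finiteDimensional_quotient_comap_subtype E _

end Hilbert

theorem statement13_general {K : Type u} [NormedAddCommGroup K] [InnerProductSpace ℂ K]
    [CompleteSpace K] (p : CPoly2)
    (S T : K →L[ℂ] K) (hV : IsPureIsopair p S T) (hfin : FiniteBimult S T) (β : ℕ)
    (E : Submodule ℂ K) (hEc : IsClosed (E : Set K))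
    (hSE : ∀ x ∈ E, S x ∈ E) (hTE : ∀ x ∈ E, T x ∈ E)
    (hcodim : FiniteDimensional ℂ (K ⧸ E))
    (hcyc : IsKCyclic (clmRestrict S E hSE) (clmRestrict T E hTE) β) :
    ∃ (W : HilbertPair.{u}) (F : Submodule ℂ W.space) (_ : IsClosed (F : Set W.space))
      (hSF : ∀ x ∈ F, W.S x ∈ F) (hTF : ∀ x ∈ F, W.T x ∈ F),
      IsPureIsopair p W.S W.T ∧ IsKCyclic W.S W.T β ∧
      FiniteDimensional ℂ (W.space ⧸ F) ∧
      UnitarilyEquivPairs (clmRestrict W.S F hSF) (clmRestrict W.T F hTF) S T := by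
  have hS : IsPureIsometry S := hV.2.1
  have : FiniteDimensional ℂ (LinearMap.ker (adjoint S : K →ₗ[ℂ] K)) :=
    Module.rank_lt_aleph0_iff.mp hfin.1
  obtain ⟨l, hl, hlE⟩ := exists_blaschke_range_le hS hEc hSE
  have := finiteDimensional_quotient_range_blaschke hS.1 hl
  obtain ⟨F, hFc, hSF, hTF, hF, hU⟩ := exists_restrict_unitarilyEquivPairs
    (norm_blaschke_apply hS.1 hl) ((Commute.refl S).blaschke_right l)
    (hV.1.symm.blaschke_right l) hlE hSE hTE
  exact ⟨⟨E, clmRestrict S E hSE, clmRestrict T E hTE⟩, F, hFc, hSF, hTF,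
    hV.clmRestrict hSE hTE, hcyc, hF, hU⟩

/-- if some closed invariant finite codimension subspace restriction of
`V` is `β`-cyclic, then `V` is unitarily equivalent to a restriction of a `β`-cyclic
pure `p`-isopair to a closed invariant subspace of finite codimension. -/
theorem statement13 {K : Type u} [NormedAddCommGroup K] [InnerProductSpace ℂ K]
    [CompleteSpace K] (p : CPoly2) (hsf : SqFree p) (hit : InnerToral p)
    (S T : K →L[ℂ] K) (hV : IsPureIsopair p S T) (hfin : FiniteBimult S T) (β : ℕ)
    (E : Submodule ℂ K) (hEc : IsClosed (E : Set K))
    (hSE : ∀ x ∈ E, S x ∈ E) (hTE : ∀ x ∈ E, T x ∈ E)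
    (hcodim : FiniteDimensional ℂ (K ⧸ E))
    (hcyc : IsKCyclic (clmRestrict S E hSE) (clmRestrict T E hTE) β) :
    ∃ (W : HilbertPair.{u}) (F : Submodule ℂ W.space) (_ : IsClosed (F : Set W.space))
      (hSF : ∀ x ∈ F, W.S x ∈ F) (hTF : ∀ x ∈ F, W.T x ∈ F),
      IsPureIsopair p W.S W.T ∧ IsKCyclic W.S W.T β ∧
      FiniteDimensional ℂ (W.space ⧸ F) ∧
      UnitarilyEquivPairs (clmRestrict W.S F hSF) (clmRestrict W.T F hTF) S T :=
  statement13_general p S T hV hfin β E hEc hSE hTE hcodim hcyc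
end
end
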